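/- arXiv:2312.01228 — 3 statements merged into one kernel-verified Lean document; each statement's English description precedes it below -/
import Mathlib

section
/- For real numbers l ≤ 0 ≤ u and any real t with l ≤ t ≤ u, there exist x, s ≥ 0 and z ∈ {0,1} satisfying x - s = t, x ≤ u·z, s ≤ -l·(1-z), and for any such x, s, z it holds that x = max(0, t). -/
section BigMReLU

variable {α : Type*} [Ring α] [LinearOrder α] [IsStrictOrderedRing α] {l u t x s z : α}

theorem exists_bigM_relu_feasible (hlt : l ≤ t) (htu : t ≤ u) :
    ∃ x s z : α, 0 ≤ x ∧ 0 ≤ s ∧ (z = 0 ∨ z = 1) ∧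
      x - s = t ∧ x ≤ u * z ∧ s ≤ -l * (1 - z) := by
  rcases le_or_gt 0 t with ht | ht
  · exact ⟨t, 0, 1, ht, le_rfl, .inr rfl, sub_zero t, by simpa using htu, by simp⟩
  · exact ⟨0, -t, 0, le_rfl, neg_nonneg.mpr ht.le, .inl rfl, by simp, by simp, by simpa using hlt⟩

/-- The binary `z` switches off one of `x`, `s`, so the split `t = x - s` is the positive/negative
part decomposition. -/
theorem bigM_relu_eq_max (hx : 0 ≤ x) (hs : 0 ≤ s) (hz : z = 0 ∨ z = 1) (hxs : x - s = t)
    (hxu : x ≤ u * z) (hsl : s ≤ -l * (1 - z)) : x = max 0 t := by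
  rcases hz with rfl | rfl
  · have hx0 : x = 0 := le_antisymm (by simpa using hxu) hx
    subst hx0
    rw [zero_sub] at hxs
    subst hxs
    exact (max_eq_left (neg_nonpos.mpr hs)).symm
  · have hs0 : s = 0 := le_antisymm (by simpa using hsl) hs
    subst hs0
    rw [sub_zero] at hxs
    subst hxs
    exact (max_eq_right hx).symm

end BigMReLU

theorem bigM_relu_exact_general (l u t : ℝ) (hlt : l ≤ t) (htu : t ≤ u) :
    (∃ x s z : ℝ, 0 ≤ x ∧ 0 ≤ s ∧ (z = 0 ∨ z = 1) ∧
      x - s = t ∧ x ≤ u * z ∧ s ≤ -l * (1 - z)) ∧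
    (∀ x s z : ℝ, 0 ≤ x → 0 ≤ s → (z = 0 ∨ z = 1) →
      x - s = t → x ≤ u * z → s ≤ -l * (1 - z) → x = max 0 t) :=
  ⟨exists_bigM_relu_feasible hlt htu, fun _ _ _ => bigM_relu_eq_max⟩

/-- Exactness of the big-M MILP encoding of the ReLU function. -/
theorem bigM_relu_exact (l u t : ℝ) (hl : l ≤ 0) (hu : 0 ≤ u)
    (hlt : l ≤ t) (htu : t ≤ u) :
    (∃ x s z : ℝ, 0 ≤ x ∧ 0 ≤ s ∧ (z = 0 ∨ z = 1) ∧
      x - s = t ∧ x ≤ u * z ∧ s ≤ -l * (1 - z)) ∧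
    (∀ x s z : ℝ, 0 ≤ x → 0 ≤ s → (z = 0 ∨ z = 1) →
      x - s = t → x ≤ u * z → s ≤ -l * (1 - z) → x = max 0 t) :=
  bigM_relu_exact_general l u t hlt htu
end

section
/- If every entry of the weight term satisfies max(w_{js}·max(0,U_s), w_{js}·max(0,L_s)) being summed gives T ≥ 0, then for any degrees 1 ≤ d_i⁺ ≤ d_max+1 and d_l⁺ ≥ 2 and any x with max(0,L) ≤ x ≤ max(0,U) componentwise, Σ_{l ∈ N⁺(i)} (1/√(d_i⁺ d_l⁺)) wⱼᵀ x_l ≤ √((d_max+1)/2) · T. -/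
/-!
Each neighbour's pre-activation `wᵀ x_l` is bounded by the interval-arithmetic bound `T`,
so the aggregate is at most `T` times the sum of the normalisation coefficients. The closed
neighbourhood of `i` has `dᵢ⁺` members and each coefficient is at most `1 / √(2 dᵢ⁺)`, so the
coefficients sum to at most `dᵢ⁺ / √(2 dᵢ⁺) = √(dᵢ⁺ / 2) ≤ √((d_max + 1) / 2)`.
-/

open Finset

theorem mul_le_max_mul_of_mem_Icc {w x lo hi : ℝ} (hlo : lo ≤ x) (hhi : x ≤ hi) :
    w * x ≤ max (w * hi) (w * lo) := by
  rcases le_total 0 w with hw | hw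
  · exact le_max_of_le_left (mul_le_mul_of_nonneg_left hhi hw)
  · exact le_max_of_le_right (mul_le_mul_of_nonpos_left hlo hw)

theorem sum_mul_le_sum_max_mul {ι : Type*} (t : Finset ι) {w x lo hi : ι → ℝ}
    (hx : ∀ s ∈ t, lo s ≤ x s ∧ x s ≤ hi s) :
    ∑ s ∈ t, w s * x s ≤ ∑ s ∈ t, max (w s * hi s) (w s * lo s) :=
  sum_le_sum fun s hs => mul_le_max_mul_of_mem_Icc (hx s hs).1 (hx s hs).2

theorem div_sqrt_mul_two {D : ℝ} (hD : 0 ≤ D) : D / √(D * 2) = √(D / 2) := by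
  rw [Real.sqrt_mul hD, ← div_div, Real.div_sqrt, Real.sqrt_div' _ zero_le_two]

theorem sum_one_div_sqrt_card_mul_le {ι : Type*} (t : Finset ι) {a : ι → ℝ}
    (ha : ∀ l ∈ t, 2 ≤ a l) :
    ∑ l ∈ t, 1 / √(#t * a l) ≤ √(#t / 2) := by
  calc ∑ l ∈ t, 1 / √(#t * a l)
      ≤ ∑ _l ∈ t, 1 / √(#t * 2) := by
        refine sum_le_sum fun l hl => ?_
        rcases (#t).eq_zero_or_pos with ht | ht
        · simp [ht]
        · have ht' : (0 : ℝ) < #t := by exact_mod_cast ht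
          gcongr
          exact ha l hl
    _ = #t / √(#t * 2) := by rw [sum_const, nsmul_eq_mul, mul_one_div]
    _ = √(#t / 2) := div_sqrt_mul_two (Nat.cast_nonneg _)

/-- Validity of the GCN FBBT upper bound: the aggregated pre-activation over
the closed neighborhood is at most √((d_max+1)/2) times the interval
bound T. -/
theorem gcn_fbbt_upper_bound_valid (N n dmax : ℕ)
    (G : SimpleGraph (Fin N)) [DecidableRel G.Adj]
    (w L U : Fin n → ℝ) (x : Fin N → Fin n → ℝ)
    (T : ℝ)
    (hT : T = ∑ s, max (w s * max 0 (U s)) (w s * max 0 (L s)))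
    (hTpos : 0 ≤ T)
    (hx : ∀ l s, max 0 (L s) ≤ x l s ∧ x l s ≤ max 0 (U s))
    (i : Fin N)
    (hdi : G.degree i + 1 ≤ dmax + 1)
    (hdl : ∀ l ∈ insert i (G.neighborFinset i), 2 ≤ G.degree l + 1) :
    ∑ l ∈ insert i (G.neighborFinset i),
        (1 / Real.sqrt (((G.degree i : ℝ) + 1) * ((G.degree l : ℝ) + 1))) *
          ∑ s, w s * x l s
      ≤ Real.sqrt (((dmax : ℝ) + 1) / 2) * T := by
  set t := insert i (G.neighborFinset i)
  have hcard : ((G.degree i : ℝ) + 1) = #t := by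
    rw [card_insert_of_notMem (G.notMem_neighborFinset_self i),
      SimpleGraph.card_neighborFinset_eq_degree, Nat.cast_succ]
  have hpre : ∀ l, ∑ s, w s * x l s ≤ T := fun l =>
    hT ▸ sum_mul_le_sum_max_mul _ fun s _ => hx l s
  rw [hcard]
  calc ∑ l ∈ t, 1 / √(#t * ((G.degree l : ℝ) + 1)) * ∑ s, w s * x l s
      ≤ ∑ l ∈ t, 1 / √(#t * ((G.degree l : ℝ) + 1)) * T :=
        sum_le_sum fun l _ => mul_le_mul_of_nonneg_left (hpre l) (by positivity)
    _ = (∑ l ∈ t, 1 / √(#t * ((G.degree l : ℝ) + 1))) * T := (sum_mul ..).symm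
    _ ≤ √(#t / 2) * T := by
        refine mul_le_mul_of_nonneg_right (sum_one_div_sqrt_card_mul_le t fun l hl => ?_) hTpos
        exact_mod_cast hdl l hl
    _ ≤ √((dmax + 1) / 2) * T := by
        rw [← hcard]
        gcongr
        exact_mod_cast Nat.le_of_add_le_add_right hdi
end

section
/- A feedforward ReLU network with the big-M MILP encoding is exact: for any input x⁰ in the box Ω with valid layerwise bounds L^k ≤ W^k x^{k-1} + b^k ≤ U^k (computed by FBBT), the feasible set of the MILP constraints projected onto (x⁰, output) equals the graph of the network function f, i.e., the unique output consistent with the constraints is f(x⁰). -/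
/-! The binary variable selects the branch: `z = 0` forces `x = 0` and hence a nonpositive
pre-activation `-s`, while `z = 1` forces `s = 0` and hence a nonnegative pre-activation `x`.
Either way `x = max 0 a`, and induction over the layers propagates this from the fixed input. -/

theorem eq_max_zero_of_bigM_relu {α : Type*} [Ring α] [LinearOrder α] [IsOrderedRing α]
    {a x s z L U : α} (ha : a = x - s) (hx : 0 ≤ x) (hs : 0 ≤ s)
    (hxU : x ≤ U * z) (hsL : s ≤ -L * (1 - z)) (hz : z = 0 ∨ z = 1) :
    x = max 0 a := by
  rcases hz with rfl | rfl
  · have hx0 : x = 0 := le_antisymm (by simpa using hxU) hx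
    rw [max_eq_left (by rw [ha, hx0, zero_sub]; exact neg_nonpos.mpr hs), hx0]
  · have hs0 : s = 0 := le_antisymm (by simpa using hsL) hs
    rw [ha, hs0, sub_zero, max_eq_right hx]

theorem relu_network_milp_exact_general (K : ℕ) (n : ℕ → ℕ)
    (W : (k : ℕ) → Fin (n (k + 1)) → Fin (n k) → ℝ)
    (b : (k : ℕ) → Fin (n (k + 1)) → ℝ)
    (L U : (k : ℕ) → Fin (n k) → ℝ)
    (xtrue : (k : ℕ) → Fin (n k) → ℝ)
    (htrue : ∀ k < K, ∀ j : Fin (n (k + 1)),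
      xtrue (k + 1) j = max 0 ((∑ i, W k j i * xtrue k i) + b k j))
    (x s : (k : ℕ) → Fin (n k) → ℝ)
    (z : (k : ℕ) → Fin (n k) → ℝ)
    (hinput : ∀ i : Fin (n 0), x 0 i = xtrue 0 i)
    (haff : ∀ k < K, ∀ j : Fin (n (k + 1)),
      (∑ i, W k j i * x k i) + b k j = x (k + 1) j - s (k + 1) j)
    (hxnn : ∀ k < K, ∀ j : Fin (n (k + 1)), 0 ≤ x (k + 1) j)
    (hsnn : ∀ k < K, ∀ j : Fin (n (k + 1)), 0 ≤ s (k + 1) j)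
    (hxu : ∀ k < K, ∀ j : Fin (n (k + 1)),
      x (k + 1) j ≤ U (k + 1) j * z (k + 1) j)
    (hsl : ∀ k < K, ∀ j : Fin (n (k + 1)),
      s (k + 1) j ≤ -L (k + 1) j * (1 - z (k + 1) j))
    (hz : ∀ k < K, ∀ j : Fin (n (k + 1)),
      z (k + 1) j = 0 ∨ z (k + 1) j = 1) :
    ∀ k ≤ K, ∀ j : Fin (n k), x k j = xtrue k j := by
  intro k hk
  induction k with
  | zero => exact hinput
  | succ k ih =>
    have hkK : k < K := hk
    have hprev : x k = xtrue k := funext (ih hkK.le)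
    intro j
    rw [htrue k hkK j, ← hprev]
    exact eq_max_zero_of_bigM_relu (haff k hkK j) (hxnn k hkK j) (hsnn k hkK j)
      (hxu k hkK j) (hsl k hkK j) (hz k hkK j)

/-- Exactness of the big-M MILP encoding of a feedforward ReLU network: for a
fixed input, with valid layerwise pre-activation bounds, any feasible point of
the MILP constraints reproduces the true layer outputs of the network. -/
theorem relu_network_milp_exact (K : ℕ) (n : ℕ → ℕ)
    (W : (k : ℕ) → Fin (n (k + 1)) → Fin (n k) → ℝ)
    (b : (k : ℕ) → Fin (n (k + 1)) → ℝ)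
    (L U : (k : ℕ) → Fin (n k) → ℝ)
    (xtrue : (k : ℕ) → Fin (n k) → ℝ)
    (htrue : ∀ k < K, ∀ j : Fin (n (k + 1)),
      xtrue (k + 1) j = max 0 ((∑ i, W k j i * xtrue k i) + b k j))
    (hbounds : ∀ k < K, ∀ j : Fin (n (k + 1)),
      L (k + 1) j ≤ (∑ i, W k j i * xtrue k i) + b k j ∧
      (∑ i, W k j i * xtrue k i) + b k j ≤ U (k + 1) j)
    (x s : (k : ℕ) → Fin (n k) → ℝ)
    (z : (k : ℕ) → Fin (n k) → ℝ)
    (hinput : ∀ i : Fin (n 0), x 0 i = xtrue 0 i)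
    (haff : ∀ k < K, ∀ j : Fin (n (k + 1)),
      (∑ i, W k j i * x k i) + b k j = x (k + 1) j - s (k + 1) j)
    (hxnn : ∀ k < K, ∀ j : Fin (n (k + 1)), 0 ≤ x (k + 1) j)
    (hsnn : ∀ k < K, ∀ j : Fin (n (k + 1)), 0 ≤ s (k + 1) j)
    (hxu : ∀ k < K, ∀ j : Fin (n (k + 1)),
      x (k + 1) j ≤ U (k + 1) j * z (k + 1) j)
    (hsl : ∀ k < K, ∀ j : Fin (n (k + 1)),
      s (k + 1) j ≤ -L (k + 1) j * (1 - z (k + 1) j))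
    (hz : ∀ k < K, ∀ j : Fin (n (k + 1)),
      z (k + 1) j = 0 ∨ z (k + 1) j = 1) :
    ∀ k ≤ K, ∀ j : Fin (n k), x k j = xtrue k j :=
  relu_network_milp_exact_general K n W b L U xtrue htrue x s z hinput haff hxnn hsnn hxu hsl hz
end
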